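/- Let f : [a,b] → ℝ be absolutely continuous on [a,b] with a.e. derivative f′. Then for every x ∈ [a,b], the quantity |∫_a^b f(t) dt − [(x−a)·f(a) + (b−x)·f(b)]| is bounded above by: (i) [ (1/4)(b−a)² + (x − (a+b)/2)² ] · ‖f′‖_∞ when f′ ∈ L^∞[a,b]; (ii) (q+1)^{−1/q} · [ (x−a)^{q+1} + (b−x)^{q+1} ]^{1/q} · ‖f′‖_p when f′ ∈ L^p[a,b] with p > 1 and 1/p + 1/q = 1; (iii) [ (1/2)(b−a) + |x − (a+b)/2| ] · ‖f′‖_1. -/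

import Mathlib

/-!
Integrating by parts against the kernel `s ↦ x - s` (with `f` absolutely continuous) gives
`∫_a^b f - ((x - a) f(a) + (b - x) f(b)) = ∫_a^b (x - s) f'(s) ds`.
The three bounds are Hölder's inequality for the pairs of exponents `(1, ∞)`, `(q, p)` and
`(∞, 1)` applied to `|x - s| * |f'(s)|`, using
`∫_a^b |x - s|^q ds = ((x - a)^(q+1) + (b - x)^(q+1)) / (q + 1)` and
`max_{s ∈ [a,b]} |x - s| = (b - a)/2 + |x - (a+b)/2|`.
-/

open MeasureTheory Set intervalIntegral

lemma integral_mul_eq_sub_integral_deriv_mul_primitive {k f' : ℝ → ℝ} {a b : ℝ}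
    (hk : AbsolutelyContinuousOnInterval k a b) (hf' : IntervalIntegrable f' volume a b) :
    ∫ s in a..b, k s * f' s =
      k b * (∫ s in a..b, f' s) - ∫ t in a..b, deriv k t * ∫ s in a..t, f' s := by
  have hF := hf'.absolutelyContinuousOnInterval_intervalIntegral left_mem_uIcc
  have hderiv : ∀ᵐ s, s ∈ uIoc a b →
      k s * f' s = k s * deriv (fun t => ∫ u in a..t, f' u) s := by
    filter_upwards [hf'.ae_hasDerivAt_integral] with s hs hsI
    rw [(hs (uIoc_subset_uIcc hsI) a left_mem_uIcc).deriv]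
  rw [integral_congr_ae hderiv, hk.integral_mul_deriv_eq_deriv_mul hF, integral_same, mul_zero,
    sub_zero]

lemma integral_sub_trapezoid_eq {f f' : ℝ → ℝ} {a b : ℝ} (hab : a ≤ b)
    (hf' : IntervalIntegrable f' volume a b)
    (hf : ∀ y ∈ Icc a b, f y = f a + ∫ t in a..y, f' t)
    (x : ℝ) :
    (∫ t in a..b, f t) - ((x - a) * f a + (b - x) * f b) = ∫ s in a..b, (x - s) * f' s := by
  have hk : AbsolutelyContinuousOnInterval (fun s => x - s) a b :=
    (contDiff_const.sub contDiff_id).contDiffOn.absolutelyContinuousOnInterval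
  have hF := hf'.absolutelyContinuousOnInterval_intervalIntegral left_mem_uIcc
  have hfa : ∫ t in a..b, f t = ∫ t in a..b, (f a + ∫ s in a..t, f' s) :=
    integral_congr fun t ht => hf t (by rwa [uIcc_of_le hab] at ht)
  rw [integral_mul_eq_sub_integral_deriv_mul_primitive hk hf', hfa,
    integral_add intervalIntegrable_const hF.continuousOn.intervalIntegrable,
    hf b (right_mem_Icc.2 hab)]
  have hdk : ∀ t, deriv (fun s => x - s) t = -1 := fun t => by simp
  simp only [hdk, neg_one_mul, intervalIntegral.integral_neg, intervalIntegral.integral_const,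
    smul_eq_mul]
  ring

lemma abs_sub_le_half_add_abs_sub_midpoint {a b s : ℝ} (x : ℝ) (hs : s ∈ Icc a b) :
    |x - s| ≤ (1 / 2) * (b - a) + |x - (a + b) / 2| := by
  obtain ⟨has, hsb⟩ := hs
  rw [abs_le]
  constructor <;> cases abs_cases (x - (a + b) / 2) <;> linarith

lemma integral_abs_sub_rpow {a b x q : ℝ} (hq : -1 < q) (hx : x ∈ Icc a b) :
    ∫ s in a..b, |x - s| ^ q = ((x - a) ^ (q + 1) + (b - x) ^ (q + 1)) / (q + 1) := by
  obtain ⟨hax, hxb⟩ := hx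
  have hleft : EqOn (fun s => |x - s| ^ q) (fun s => (x - s) ^ q) (uIcc a x) := by
    intro s hs
    rw [uIcc_of_le hax] at hs
    simp only [abs_of_nonneg (sub_nonneg.2 hs.2)]
  have hright : EqOn (fun s => |x - s| ^ q) (fun s => (s - x) ^ q) (uIcc x b) := by
    intro s hs
    rw [uIcc_of_le hxb] at hs
    simp only [abs_sub_comm x s, abs_of_nonneg (sub_nonneg.2 hs.1)]
  have hint_left : IntervalIntegrable (fun s => |x - s| ^ q) volume a x :=
    (intervalIntegrable_congr (hleft.mono uIoc_subset_uIcc)).2 <| by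
      simpa only [sub_sub_cancel, sub_zero] using
        (intervalIntegrable_rpow' hq (a := x - a) (b := 0)).comp_sub_left x
  have hint_right : IntervalIntegrable (fun s => |x - s| ^ q) volume x b :=
    (intervalIntegrable_congr (hright.mono uIoc_subset_uIcc)).2 <| by
      simpa only [zero_add, sub_add_cancel] using
        (intervalIntegrable_rpow' hq (a := 0) (b := b - x)).comp_sub_right x
  rw [← integral_add_adjacent_intervals hint_left hint_right, integral_congr hleft,
    integral_congr hright, integral_comp_sub_left (· ^ q), integral_comp_sub_right (· ^ q),
    sub_self, integral_rpow (Or.inl hq), integral_rpow (Or.inl hq),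
    Real.zero_rpow (by linarith)]
  ring

lemma integral_abs_sub_rpow_rpow_one_div {a b x q : ℝ} (hq : -1 < q) (hx : x ∈ Icc a b) :
    (∫ s in a..b, |x - s| ^ q) ^ (1 / q) =
      1 / (q + 1) ^ (1 / q) * ((x - a) ^ (q + 1) + (b - x) ^ (q + 1)) ^ (1 / q) := by
  have hmoments : 0 ≤ (x - a) ^ (q + 1) + (b - x) ^ (q + 1) :=
    add_nonneg (Real.rpow_nonneg (sub_nonneg.2 hx.1) _) (Real.rpow_nonneg (sub_nonneg.2 hx.2) _)
  rw [integral_abs_sub_rpow hq hx, Real.div_rpow hmoments (by linarith), div_eq_inv_mul,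
    inv_eq_one_div]

lemma memLp_abs_sub_restrict_Icc (a b x : ℝ) (p : ENNReal) :
    MemLp (fun s => |x - s|) p (volume.restrict (Icc a b)) :=
  .of_bound (by fun_prop : Continuous fun s => |x - s|).aestronglyMeasurable _ <|
    ae_restrict_of_forall_mem measurableSet_Icc fun s hs => by
      simpa only [Real.norm_eq_abs, abs_abs] using abs_sub_le_half_add_abs_sub_midpoint x hs

lemma integral_abs_sub {a b x : ℝ} (hx : x ∈ Icc a b) :
    ∫ s in a..b, |x - s| = (1 / 4) * (b - a) ^ 2 + (x - (a + b) / 2) ^ 2 := by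
  have h := integral_abs_sub_rpow (q := 1) (by norm_num) hx
  simp only [Real.rpow_one, one_add_one_eq_two, Real.rpow_two] at h
  rw [h]
  ring

section WeightedIntegral

variable {a b : ℝ} {f g : ℝ → ℝ}

lemma intervalIntegral_mul_abs_le_mul_eLpNorm_top (hab : a ≤ b)
    (hg : IntervalIntegrable g volume a b) (hg_nonneg : ∀ s ∈ Icc a b, 0 ≤ g s)
    (hf : MemLp f ⊤ (volume.restrict (Icc a b))) :
    ∫ s in a..b, g s * |f s| ≤
      (∫ s in a..b, g s) * (eLpNorm f ⊤ (volume.restrict (Icc a b))).toReal := by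
  have hg_Icc := (intervalIntegrable_iff_integrableOn_Icc_of_le hab).1 hg
  have hgf : IntervalIntegrable (fun s => g s * |f s|) volume a b :=
    (intervalIntegrable_iff_integrableOn_Icc_of_le hab).2 (hg_Icc.mul_of_top_left hf.abs)
  rw [← intervalIntegral.integral_mul_const]
  refine integral_mono_ae_restrict hab hgf (hg.mul_const _) ?_
  rw [toReal_eLpNorm hf.1]
  filter_upwards [ae_restrict_mem measurableSet_Icc, ae_le_lpNorm_exponent_top hf] with s hs hfs
  exact mul_le_mul_of_nonneg_left hfs (hg_nonneg s hs)

lemma intervalIntegral_mul_le_Lp_mul_Lq_of_nonneg {p q : ℝ} (hab : a ≤ b)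
    (hpq : p.HolderConjugate q) (hf_nonneg : 0 ≤ᵐ[volume.restrict (Icc a b)] f)
    (hg_nonneg : 0 ≤ᵐ[volume.restrict (Icc a b)] g)
    (hf : MemLp f (ENNReal.ofReal p) (volume.restrict (Icc a b)))
    (hg : MemLp g (ENNReal.ofReal q) (volume.restrict (Icc a b))) :
    ∫ s in a..b, f s * g s ≤
      (∫ s in a..b, f s ^ p) ^ (1 / p) * (∫ s in a..b, g s ^ q) ^ (1 / q) := by
  simp only [integral_of_le hab, ← integral_Icc_eq_integral_Ioc]
  exact integral_mul_le_Lp_mul_Lq_of_nonneg hpq hf_nonneg hg_nonneg hf hg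

lemma intervalIntegral_mul_le_mul_integral_of_le {C : ℝ} (hab : a ≤ b)
    (hf : IntervalIntegrable f volume a b) (hf_nonneg : ∀ s ∈ Icc a b, 0 ≤ f s)
    (hg : ContinuousOn g (uIcc a b)) (hgC : ∀ s ∈ Icc a b, g s ≤ C) :
    ∫ s in a..b, g s * f s ≤ C * ∫ s in a..b, f s := by
  rw [← intervalIntegral.integral_const_mul]
  exact integral_mono_on hab (hf.continuousOn_mul hg) (hf.const_mul C)
    fun s hs => mul_le_mul_of_nonneg_right (hgC s hs) (hf_nonneg s hs)

end WeightedIntegral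

theorem generalised_trapezoid_absolutely_continuous
    (a b : ℝ) (hab : a < b) (f f' : ℝ → ℝ)
    (hf'int : IntervalIntegrable f' volume a b)
    (hf : ∀ y ∈ Set.Icc a b, f y = f a + ∫ t in a..y, f' t)
    (x : ℝ) (hx : x ∈ Set.Icc a b) :
    (MemLp f' ⊤ (volume.restrict (Set.Icc a b)) →
      |(∫ t in a..b, f t) - ((x - a) * f a + (b - x) * f b)| ≤
        ((1 / 4) * (b - a) ^ 2 + (x - (a + b) / 2) ^ 2) *
          (eLpNorm f' ⊤ (volume.restrict (Set.Icc a b))).toReal) ∧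
    (∀ p q : ℝ, 1 < p → 1 / p + 1 / q = 1 →
      MemLp f' (ENNReal.ofReal p) (volume.restrict (Set.Icc a b)) →
      |(∫ t in a..b, f t) - ((x - a) * f a + (b - x) * f b)| ≤
        (1 / (q + 1) ^ (1 / q)) * ((x - a) ^ (q + 1) + (b - x) ^ (q + 1)) ^ (1 / q) *
          (∫ s in a..b, |f' s| ^ p) ^ (1 / p)) ∧
    (|(∫ t in a..b, f t) - ((x - a) * f a + (b - x) * f b)| ≤
      ((1 / 2) * (b - a) + |x - (a + b) / 2|) * ∫ s in a..b, |f' s|) := by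
  have hkernel : Continuous fun s => |x - s| := by fun_prop
  have herror : |(∫ t in a..b, f t) - ((x - a) * f a + (b - x) * f b)| ≤
      ∫ s in a..b, |x - s| * |f' s| := by
    rw [integral_sub_trapezoid_eq hab.le hf'int hf x]
    simpa only [abs_mul] using abs_integral_le_integral_abs (f := fun s => (x - s) * f' s) hab.le
  refine ⟨fun hf'_top => ?_, fun p q hp hpq hf'_p => ?_, ?_⟩
  · calc _ ≤ _ := herror
      _ ≤ _ := intervalIntegral_mul_abs_le_mul_eLpNorm_top hab.le (hkernel.intervalIntegrable a b)
          (fun s _ => abs_nonneg _) hf'_top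
      _ = _ := by rw [integral_abs_sub hx]
  · have hpq' : p.HolderConjugate q :=
      Real.holderConjugate_iff.2 ⟨hp, by simpa only [one_div] using hpq⟩
    calc _ ≤ _ := herror
      _ = ∫ s in a..b, |f' s| * |x - s| := by simp_rw [mul_comm]
      _ ≤ _ := intervalIntegral_mul_le_Lp_mul_Lq_of_nonneg hab.le hpq'
          (ae_of_all _ fun _ => abs_nonneg _) (ae_of_all _ fun _ => abs_nonneg _) hf'_p.abs
          (memLp_abs_sub_restrict_Icc a b x _)
      _ = _ := by
        rw [integral_abs_sub_rpow_rpow_one_div (by linarith [hpq'.symm.lt]) hx]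
        ring
  · exact herror.trans <| intervalIntegral_mul_le_mul_integral_of_le hab.le hf'int.abs
      (fun s _ => abs_nonneg _) hkernel.continuousOn
      fun s hs => abs_sub_le_half_add_abs_sub_midpoint x hs
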